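/- For every (x, y, z) ∈ ℂ³ with (x, y, z) ≠ (0, 0, 0), there exist vectors v₁, v₂, v₃ ∈ ℂ² that span ℂ² and satisfy det(v₁, v₂) = x, det(v₁, v₃) = y, and det(v₂, v₃) = z, where det(a, b) denotes the determinant of the 2×2 matrix with columns a, b. -/

import Mathlib

/-!
Two vectors with nonzero determinant already span `ℂ²`, so only the determinants need to be
realized. When `x ≠ 0` the triple `(1, 0), (0, x), (-z / x, y)` does it; the cases `y ≠ 0` and
`z ≠ 0` reduce to this one, because permuting the three vectors permutes their pairwise
determinants up to sign.
-/

open Matrix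

/-- `det₂ x y` is the determinant of the `2×2` matrix with columns `x` and `y`. -/
def det₂ (x y : Fin 2 → ℂ) : ℂ := Matrix.det !![x 0, y 0; x 1, y 1]

lemma det₂_apply (a b : Fin 2 → ℂ) : det₂ a b = a 0 * b 1 - b 0 * a 1 :=
  det_fin_two_of _ _ _ _

lemma det₂_swap (a b : Fin 2 → ℂ) : det₂ b a = -det₂ a b := by
  rw [det₂_apply, det₂_apply]; ring

lemma span_pair_eq_top_of_det₂_ne_zero {a b : Fin 2 → ℂ} (h : det₂ a b ≠ 0) :
    Submodule.span ℂ {a, b} = ⊤ := by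
  have hcols : (!![a 0, b 0; a 1, b 1]).col = ![a, b] := by
    ext j i; fin_cases j <;> fin_cases i <;> rfl
  have hli : LinearIndependent ℂ ![a, b] := hcols ▸ linearIndependent_cols_of_det_ne_zero h
  rw [← range_cons_cons_empty a b ![]]
  exact hli.span_eq_top_of_card_eq_finrank (by simp)

lemma span_triple_eq_top {v₁ v₂ v₃ : Fin 2 → ℂ}
    (h : (det₂ v₁ v₂, det₂ v₁ v₃, det₂ v₂ v₃) ≠ (0, 0, 0)) :
    Submodule.span ℂ {v₁, v₂, v₃} = ⊤ := by
  have h : det₂ v₁ v₂ ≠ 0 ∨ det₂ v₁ v₃ ≠ 0 ∨ det₂ v₂ v₃ ≠ 0 := by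
    simpa only [ne_eq, Prod.mk.injEq, not_and_or] using h
  rcases h with h | h | h <;>
    refine top_unique ((span_pair_eq_top_of_det₂_ne_zero h).ge.trans (Submodule.span_mono ?_)) <;>
    simp [Set.insert_subset_iff]

lemma exists_det₂_eq_of_ne_zero {x : ℂ} (hx : x ≠ 0) (y z : ℂ) :
    ∃ v₁ v₂ v₃ : Fin 2 → ℂ, det₂ v₁ v₂ = x ∧ det₂ v₁ v₃ = y ∧ det₂ v₂ v₃ = z :=
  ⟨![1, 0], ![0, x], ![-z / x, y], by simp [det₂_apply, hx]⟩

lemma exists_det₂_eq {x y z : ℂ} (h : (x, y, z) ≠ (0, 0, 0)) :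
    ∃ v₁ v₂ v₃ : Fin 2 → ℂ, det₂ v₁ v₂ = x ∧ det₂ v₁ v₃ = y ∧ det₂ v₂ v₃ = z := by
  have h : x ≠ 0 ∨ y ≠ 0 ∨ z ≠ 0 := by
    simpa only [ne_eq, Prod.mk.injEq, not_and_or] using h
  rcases h with hx | hy | hz
  · exact exists_det₂_eq_of_ne_zero hx y z
  · obtain ⟨a, b, c, hab, hac, hbc⟩ := exists_det₂_eq_of_ne_zero hy x (-z)
    exact ⟨a, c, b, hac, hab, by rw [det₂_swap, hbc, neg_neg]⟩
  · obtain ⟨a, b, c, hab, hac, hbc⟩ := exists_det₂_eq_of_ne_zero hz (-x) (-y)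
    exact ⟨c, a, b, by rw [det₂_swap, hac, neg_neg], by rw [det₂_swap, hbc, neg_neg], hab⟩

/-- Every nonzero `(x, y, z) ∈ ℂ³` is realized as the triple of pairwise
determinants of a spanning triple of vectors in `ℂ²`. -/
theorem pairwise_dets_surjective
    (x y z : ℂ) (h : (x, y, z) ≠ (0, 0, 0)) :
    ∃ v₁ v₂ v₃ : Fin 2 → ℂ,
      Submodule.span ℂ {v₁, v₂, v₃} = ⊤ ∧
      det₂ v₁ v₂ = x ∧ det₂ v₁ v₃ = y ∧ det₂ v₂ v₃ = z := by
  obtain ⟨v₁, v₂, v₃, h₁₂, h₁₃, h₂₃⟩ := exists_det₂_eq h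
  refine ⟨v₁, v₂, v₃, span_triple_eq_top ?_, h₁₂, h₁₃, h₂₃⟩
  rwa [h₁₂, h₁₃, h₂₃]
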